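/- Suppose Condition 1 holds and Ω is strictly convex on dom(Ω). Then Ω_T^* is differentiable on ℝ^ϱ and, for every θ ∈ ℝ^ϱ and every π ∈ Π(θ), the gradient of the value function θ ↦ min_{π'∈Δ^N} Ω^*(θ + L^ρ π') at θ equals ∇Ω^*(θ + L^ρ π); in particular ∇Ω_T^*(θ) = ∇Ω^*(θ + L^ρ π) for every minimizer π ∈ Π(θ). -/

import Mathlib

open scoped BigOperators
noncomputable section

/-- Score/probability space: `ℝ^ϱ` with Euclidean structure. -/
abbrev E (ϱ : ℕ) : Type := EuclideanSpace ℝ (Fin ϱ)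

/-- Euclidean dot product `⟨θ, p⟩`. -/
def dot {ϱ : ℕ} (θ p : E ϱ) : ℝ := ∑ i, θ i * p i

/-- Fenchel conjugate of an extended-real-valued function:
`Ω^*(θ) = sup_{p ∈ dom Ω} ⟨θ, p⟩ − Ω(p)`. -/
def conj {ϱ : ℕ} (f : E ϱ → EReal) (θ : E ϱ) : EReal :=
  ⨆ p ∈ {q : E ϱ | f q ≠ ⊤}, (((dot θ p : ℝ) : EReal) - f p)

/-- Convexity for extended-real-valued functions. -/
def ErealConvex {ϱ : ℕ} (f : E ϱ → EReal) : Prop :=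
  ∀ p q : E ϱ, ∀ a b : ℝ, 0 ≤ a → 0 ≤ b → a + b = 1 →
    f (a • p + b • q) ≤ (a : EReal) * f p + (b : EReal) * f q

/-- `T(p) = − min_{t ∈ Ŷ} ⟨p, ℓ^ρ(t)⟩`. -/
def Tfun {ϱ N : ℕ} (ℓρ : Fin N → E ϱ) (p : E ϱ) : ℝ := - ⨅ t, dot p (ℓρ t)

/-- The convolutional negentropy `Ω_T = Ω + T`. -/
def OmegaT {ϱ N : ℕ} (Ω : E ϱ → EReal) (ℓρ : Fin N → E ϱ) (p : E ϱ) : EReal :=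
  Ω p + ((Tfun ℓρ p : ℝ) : EReal)

/-- Loss-matrix action: `L^ρ π = Σ_t π_t ℓ^ρ(t)`. -/
def Lrho {ϱ N : ℕ} (ℓρ : Fin N → E ϱ) (π : Fin N → ℝ) : E ϱ :=
  WithLp.toLp 2 (fun i => ∑ t, π t * ℓρ t i)

/-- Condition 1: Ω proper convex l.s.c., `conv(ρ(𝒴)) ⊆ dom Ω`, `dom Ω^* = ℝ^ϱ`. -/
def Condition1 {ϱ K : ℕ} (Ω : E ϱ → EReal) (ρ : Fin K → E ϱ) : Prop :=
  (∀ p, Ω p ≠ ⊥) ∧ (∃ p, Ω p ≠ ⊤) ∧ ErealConvex Ω ∧ LowerSemicontinuous Ω ∧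
  (convexHull ℝ (Set.range ρ) ⊆ {p : E ϱ | Ω p ≠ ⊤}) ∧ (∀ θ : E ϱ, conj Ω θ ≠ ⊤)

/-- `Π(θ) = argmin_{π ∈ Δ^N} Ω^*(θ + L^ρ π)`. -/
def Pii {ϱ N : ℕ} (Ω : E ϱ → EReal) (ℓρ : Fin N → E ϱ) (θ : E ϱ) : Set (Fin N → ℝ) :=
  {π | π ∈ stdSimplex ℝ (Fin N) ∧
       ∀ π' ∈ stdSimplex ℝ (Fin N), conj Ω (θ + Lrho ℓρ π) ≤ conj Ω (θ + Lrho ℓρ π')}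

/-- The convolutional Fenchel–Young loss `L_{Ω_T}(θ, y) = Ω_T^*(θ) + Ω_T(ρ(y)) − ⟨θ, ρ(y)⟩`. -/
def LossFY {ϱ N K : ℕ} (Ω : E ϱ → EReal) (ρ : Fin K → E ϱ) (ℓρ : Fin N → E ϱ)
    (θ : E ϱ) (y : Fin K) : ℝ :=
  (conj (OmegaT Ω ℓρ) θ).toReal + (OmegaT Ω ℓρ (ρ y)).toReal - dot θ (ρ y)

/-- Surrogate risk of the convolutional Fenchel–Young loss. -/
def RsurL {ϱ N K : ℕ} (Ω : E ϱ → EReal) (ρ : Fin K → E ϱ) (ℓρ : Fin N → E ϱ)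
    (θ : E ϱ) (η : Fin K → ℝ) : ℝ :=
  ∑ y, η y * LossFY Ω ρ ℓρ θ y

/-- Surrogate regret of the convolutional Fenchel–Young loss. -/
def RegSur {ϱ N K : ℕ} (Ω : E ϱ → EReal) (ρ : Fin K → E ϱ) (ℓρ : Fin N → E ϱ)
    (θ : E ϱ) (η : Fin K → ℝ) : ℝ :=
  RsurL Ω ρ ℓρ θ η - ⨅ θ' : E ϱ, RsurL Ω ρ ℓρ θ' η

/-- Target regret of a discrete prediction `t` under target loss `ℓ`. -/
def RegTar {N K : ℕ} (ℓ : Fin N → Fin K → ℝ) (t : Fin N) (η : Fin K → ℝ) : ℝ :=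
  (∑ y, η y * ℓ t y) - ⨅ t' : Fin N, ∑ y, η y * ℓ t' y

/-- Real-valued version of a finite Fenchel conjugate. -/
def starFn {ϱ : ℕ} (f : E ϱ → EReal) (θ : E ϱ) : ℝ := (conj f θ).toReal

open scoped RealInnerProductSpace

lemma dot_eq_inner {ϱ : ℕ} (θ p : E ϱ) : dot θ p = ⟪θ, p⟫ := by
  simp [dot, PiLp.inner_apply, RCLike.inner_apply, mul_comm]

lemma dot_comm {ϱ : ℕ} (θ p : E ϱ) : dot θ p = dot p θ := by
  simp [dot, mul_comm]

lemma dot_add_left {ϱ : ℕ} (θ ψ p : E ϱ) : dot (θ + ψ) p = dot θ p + dot ψ p := by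
  simp [dot, add_mul, Finset.sum_add_distrib]

lemma dot_sub_left {ϱ : ℕ} (θ ψ p : E ϱ) : dot (θ - ψ) p = dot θ p - dot ψ p := by
  simp [dot, sub_mul, Finset.sum_sub_distrib]

lemma dot_smul_left {ϱ : ℕ} (a : ℝ) (θ p : E ϱ) : dot (a • θ) p = a * dot θ p := by
  simp [dot, Finset.mul_sum, mul_assoc]

lemma dot_single_left {ϱ : ℕ} (i : Fin ϱ) (p : E ϱ) :
    dot (EuclideanSpace.single i (1:ℝ)) p = p i := by
  simp [dot, EuclideanSpace.single_apply, Finset.sum_ite_eq]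

section basic
variable {ϱ : ℕ} {g : E ϱ → EReal}

lemma term_eq_coe (hbot : ∀ p, g p ≠ ⊥) {p : E ϱ} (hp : g p ≠ ⊤) (θ : E ϱ) :
    ((dot θ p : ℝ) : EReal) - g p = ((dot θ p - (g p).toReal : ℝ) : EReal) := by
  rw [EReal.coe_sub]
  congr 1
  exact (EReal.coe_toReal hp (hbot p)).symm

lemma coe_le_conj (hbot : ∀ p, g p ≠ ⊥) {p : E ϱ} (hp : g p ≠ ⊤) (θ : E ϱ) :
    ((dot θ p - (g p).toReal : ℝ) : EReal) ≤ conj g θ := by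
  rw [← term_eq_coe hbot hp θ]
  exact le_iSup₂ (f := fun p _ => ((dot θ p : ℝ) : EReal) - g p) p hp

lemma conj_ne_bot (hbot : ∀ p, g p ≠ ⊥) (hne : ∃ p, g p ≠ ⊤) (θ : E ϱ) :
    conj g θ ≠ ⊥ := by
  obtain ⟨p, hp⟩ := hne
  intro h
  have := coe_le_conj hbot hp θ
  rw [h, le_bot_iff] at this
  exact EReal.coe_ne_bot _ this

lemma conj_eq_coe (hbot : ∀ p, g p ≠ ⊥) (hne : ∃ p, g p ≠ ⊤) (θ : E ϱ)
    (hfin : conj g θ ≠ ⊤) : conj g θ = ((starFn g θ : ℝ) : EReal) :=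
  (EReal.coe_toReal hfin (conj_ne_bot hbot hne θ)).symm

lemma le_starFn (hbot : ∀ p, g p ≠ ⊥) (hne : ∃ p, g p ≠ ⊤) (θ : E ϱ)
    (hfin : conj g θ ≠ ⊤) {p : E ϱ} (hp : g p ≠ ⊤) :
    dot θ p - (g p).toReal ≤ starFn g θ := by
  have := coe_le_conj hbot hp θ
  rw [conj_eq_coe hbot hne θ hfin, EReal.coe_le_coe_iff] at this
  exact this

lemma exists_near_max (hbot : ∀ p, g p ≠ ⊥) (hne : ∃ p, g p ≠ ⊤) (θ : E ϱ)
    (hfin : conj g θ ≠ ⊤) {ε : ℝ} (hε : 0 < ε) :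
    ∃ p, g p ≠ ⊤ ∧ starFn g θ - ε < dot θ p - (g p).toReal := by
  have h1 : ((starFn g θ - ε : ℝ) : EReal) < conj g θ := by
    rw [conj_eq_coe hbot hne θ hfin, EReal.coe_lt_coe_iff]
    linarith
  rw [conj] at h1
  obtain ⟨p, hmem⟩ := lt_iSup_iff.mp h1
  obtain ⟨hp, hlt⟩ := lt_iSup_iff.mp hmem
  refine ⟨p, hp, ?_⟩
  rw [term_eq_coe hbot hp θ, EReal.coe_lt_coe_iff] at hlt
  exact hlt

lemma starFn_le (hbot : ∀ p, g p ≠ ⊥) (hne : ∃ p, g p ≠ ⊤) (θ : E ϱ)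
    (hfin : conj g θ ≠ ⊤) {M : ℝ} (hM : ∀ p, g p ≠ ⊤ → dot θ p - (g p).toReal ≤ M) :
    starFn g θ ≤ M := by
  have : conj g θ ≤ ((M : ℝ) : EReal) := by
    refine iSup₂_le fun p hp => ?_
    rw [term_eq_coe hbot hp θ]
    exact EReal.coe_le_coe_iff.mpr (hM p hp)
  rw [conj_eq_coe hbot hne θ hfin, EReal.coe_le_coe_iff] at this
  exact this

open Filter Topology

lemma limit_max (hbot : ∀ p, g p ≠ ⊥) (hlsc : LowerSemicontinuous g)
    {θn : ℕ → E ϱ} {θ : E ϱ} (hθ : Tendsto θn atTop (𝓝 θ))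
    {pn : ℕ → E ϱ} {pbar : E ϱ} (hdom : ∀ n, g (pn n) ≠ ⊤)
    (hp : Tendsto pn atTop (𝓝 pbar)) {S : ℝ}
    (hval : Tendsto (fun n => dot (θn n) (pn n) - (g (pn n)).toReal) atTop (𝓝 S)) :
    g pbar ≠ ⊤ ∧ S ≤ dot θ pbar - (g pbar).toReal := by
  have hdot : Tendsto (fun n => dot (θn n) (pn n)) atTop (𝓝 (dot θ pbar)) := by
    simp only [dot_eq_inner]
    exact hθ.inner hp
  have hg : Tendsto (fun n => (g (pn n)).toReal) atTop (𝓝 (dot θ pbar - S)) := by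
    have := hdot.sub hval
    simpa using this
  have hle : g pbar ≤ ((dot θ pbar - S : ℝ) : EReal) := by
    by_contra hlt
    push_neg at hlt
    obtain ⟨c, hc1, hc2⟩ := EReal.exists_between_coe_real hlt
    have hev : ∀ᶠ n in atTop, ((c : ℝ) : EReal) < g (pn n) := hp.eventually (hlsc pbar _ hc2)
    have hev2 : ∀ᶠ n in atTop, (g (pn n)).toReal < c := by
      have : (dot θ pbar - S) < c := by exact_mod_cast hc1
      exact hg.eventually_lt_const this |>.mono (fun n h => h)
    obtain ⟨n, h1, h2⟩ := (hev.and hev2).exists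
    rw [← EReal.coe_toReal (hdom n) (hbot (pn n)), EReal.coe_lt_coe_iff] at h1
    linarith
  have hdomb : g pbar ≠ ⊤ := by
    intro h
    rw [h, top_le_iff] at hle
    exact EReal.coe_ne_top _ hle
  refine ⟨hdomb, ?_⟩
  rw [← EReal.coe_toReal hdomb (hbot pbar), EReal.coe_le_coe_iff] at hle
  linarith

lemma norm_le_of_coord {p : E ϱ} {B : ℝ} (hB : 0 ≤ B) (h : ∀ i, |p i| ≤ B) :
    ‖p‖ ≤ Real.sqrt ϱ * B := by
  rw [EuclideanSpace.norm_eq]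
  calc Real.sqrt (∑ i, ‖p i‖ ^ 2) ≤ Real.sqrt (∑ _i : Fin ϱ, B ^ 2) := by
        apply Real.sqrt_le_sqrt
        apply Finset.sum_le_sum
        intro i _
        have := h i
        rw [Real.norm_eq_abs]
        nlinarith [abs_nonneg (p i)]
    _ = Real.sqrt ϱ * B := by
        rw [Finset.sum_const, Finset.card_univ, Fintype.card_fin, nsmul_eq_mul,
          Real.sqrt_mul (by positivity), Real.sqrt_sq hB]


lemma coord_bound (hbot : ∀ p, g p ≠ ⊥) (hne : ∃ p, g p ≠ ⊤)
    (hfin : ∀ ψ, conj g ψ ≠ ⊤) {θ : E ϱ} {p : E ϱ} (hp : g p ≠ ⊤) {c : ℝ}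
    (hc : c ≤ dot θ p - (g p).toReal) (i : Fin ϱ) :
    |p i| ≤ max (starFn g (θ + EuclideanSpace.single i (1:ℝ)) - c)
      (starFn g (θ - EuclideanSpace.single i (1:ℝ)) - c) := by
  have h1 : dot (θ + EuclideanSpace.single i (1:ℝ)) p - (g p).toReal
      ≤ starFn g (θ + EuclideanSpace.single i (1:ℝ)) :=
    le_starFn hbot hne _ (hfin _) hp
  have h2 : dot (θ - EuclideanSpace.single i (1:ℝ)) p - (g p).toReal
      ≤ starFn g (θ - EuclideanSpace.single i (1:ℝ)) :=
    le_starFn hbot hne _ (hfin _) hp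
  rw [dot_add_left, dot_single_left] at h1
  rw [dot_sub_left, dot_single_left] at h2
  rw [abs_le']
  constructor
  · exact le_max_of_le_left (by linarith)
  · exact le_max_of_le_right (by linarith)

lemma exists_max (hbot : ∀ p, g p ≠ ⊥) (hne : ∃ p, g p ≠ ⊤)
    (hlsc : LowerSemicontinuous g) (hfin : ∀ ψ, conj g ψ ≠ ⊤) (θ : E ϱ) :
    ∃ p, g p ≠ ⊤ ∧ dot θ p - (g p).toReal = starFn g θ := by
  set S := starFn g θ with hS
  -- choose a maximizing sequence
  have hseq : ∀ n : ℕ, ∃ p, g p ≠ ⊤ ∧ S - 1/(n+1) < dot θ p - (g p).toReal := by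
    intro n
    exact exists_near_max hbot hne θ (hfin θ) (by positivity)
  choose pn hdom hval using hseq
  -- coordinate bounds
  set B := fun i : Fin ϱ => max (starFn g (θ + EuclideanSpace.single i (1:ℝ)) - (S-1))
      (starFn g (θ - EuclideanSpace.single i (1:ℝ)) - (S-1)) with hB
  set B0 : ℝ := max 0 (⨆ i, B i) with hB0
  have hcoordB : ∀ n i, |pn n i| ≤ B0 := by
    intro n i
    have h1 : S - 1 ≤ dot θ (pn n) - (g (pn n)).toReal := by
      have := hval n
      have h2 : (1:ℝ)/(n+1) ≤ 1 := by
        rw [div_le_one (by positivity)]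
        linarith [Nat.cast_nonneg (α := ℝ) n]
      linarith
    refine le_trans (coord_bound hbot hne hfin (hdom n) h1 i) ?_
    refine le_trans ?_ (le_max_right 0 _)
    exact le_ciSup (Finite.bddAbove_range B) i
  have hB0 : 0 ≤ B0 := le_max_left _ _
  have hbound : ∀ n, pn n ∈ Metric.closedBall (0 : E ϱ) (Real.sqrt ϱ * B0) := by
    intro n
    rw [Metric.mem_closedBall, dist_zero_right]
    exact norm_le_of_coord hB0 (hcoordB n)
  obtain ⟨pbar, _, φ, hφ, hconv⟩ :=
    tendsto_subseq_of_bounded (Metric.isBounded_closedBall) hbound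
  have hvaltend : Tendsto (fun n => dot θ (pn (φ n)) - (g (pn (φ n))).toReal) atTop (𝓝 S) := by
    have hub : ∀ n, dot θ (pn (φ n)) - (g (pn (φ n))).toReal ≤ S :=
      fun n => le_starFn hbot hne θ (hfin θ) (hdom (φ n))
    have hlb : ∀ n, S - 1/(φ n+1) < dot θ (pn (φ n)) - (g (pn (φ n))).toReal :=
      fun n => hval (φ n)
    have h0 : Tendsto (fun n : ℕ => S - 1/((φ n : ℝ)+1)) atTop (𝓝 S) := by
      have : Tendsto (fun n : ℕ => 1/((φ n : ℝ)+1)) atTop (𝓝 0) := by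
        apply Tendsto.comp tendsto_one_div_add_atTop_nhds_zero_nat
        exact hφ.tendsto_atTop
      simpa using (tendsto_const_nhds (x := S)).sub this
    exact tendsto_of_tendsto_of_tendsto_of_le_of_le h0 tendsto_const_nhds
      (fun n => (hlb n).le) hub
  obtain ⟨hdomb, hle⟩ := limit_max hbot hlsc tendsto_const_nhds
    (fun n => hdom (φ n)) hconv hvaltend
  exact ⟨pbar, hdomb, le_antisymm (le_starFn hbot hne θ (hfin θ) hdomb) hle⟩

lemma max_unique (hbot : ∀ p, g p ≠ ⊥) (hne : ∃ p, g p ≠ ⊤)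
    (hstrict : StrictConvexOn ℝ {p : E ϱ | g p ≠ ⊤} (fun p => (g p).toReal))
    (hfin : ∀ ψ, conj g ψ ≠ ⊤) (θ : E ϱ) {p q : E ϱ}
    (hp : g p ≠ ⊤) (hq : g q ≠ ⊤)
    (hpv : dot θ p - (g p).toReal = starFn g θ)
    (hqv : dot θ q - (g q).toReal = starFn g θ) : p = q := by
  by_contra hne'
  have hmem : (1/2 : ℝ) • p + (1/2 : ℝ) • q ∈ {p : E ϱ | g p ≠ ⊤} :=
    hstrict.1 hp hq (by norm_num) (by norm_num) (by norm_num)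
  have hlt := hstrict.2 hp hq hne' (by norm_num : (0:ℝ) < 1/2) (by norm_num : (0:ℝ) < 1/2)
    (by norm_num)
  have hdot : dot θ ((1/2 : ℝ) • p + (1/2 : ℝ) • q) = (1/2) * dot θ p + (1/2) * dot θ q := by
    rw [dot_comm, dot_add_left, dot_smul_left, dot_smul_left, dot_comm p θ, dot_comm q θ]
  have hub := le_starFn hbot hne θ (hfin θ) hmem
  rw [hdot] at hub
  simp only [smul_eq_mul] at hlt
  linarith

lemma starFn_convexOn (hbot : ∀ p, g p ≠ ⊥) (hne : ∃ p, g p ≠ ⊤)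
    (hlsc : LowerSemicontinuous g) (hfin : ∀ ψ, conj g ψ ≠ ⊤) :
    ConvexOn ℝ Set.univ (starFn g) := by
  refine ⟨convex_univ, fun θ1 _ θ2 _ a b ha hb hab => ?_⟩
  obtain ⟨p, hp, hpv⟩ := exists_max hbot hne hlsc hfin (a • θ1 + b • θ2)
  have h1 : dot θ1 p - (g p).toReal ≤ starFn g θ1 := le_starFn hbot hne θ1 (hfin θ1) hp
  have h2 : dot θ2 p - (g p).toReal ≤ starFn g θ2 := le_starFn hbot hne θ2 (hfin θ2) hp
  have hdot : dot (a • θ1 + b • θ2) p = a * dot θ1 p + b * dot θ2 p := by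
    rw [dot_add_left, dot_smul_left, dot_smul_left]
  rw [← hpv, hdot]
  have e1 : a * (dot θ1 p - (g p).toReal) ≤ a * starFn g θ1 :=
    mul_le_mul_of_nonneg_left h1 ha
  have e2 : b * (dot θ2 p - (g p).toReal) ≤ b * starFn g θ2 :=
    mul_le_mul_of_nonneg_left h2 hb
  have : a * (g p).toReal + b * (g p).toReal = (g p).toReal := by
    rw [← add_mul, hab, one_mul]
  rw [mul_sub] at e1 e2
  simp only [smul_eq_mul]
  linarith

lemma starFn_continuous (hbot : ∀ p, g p ≠ ⊥) (hne : ∃ p, g p ≠ ⊤)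
    (hlsc : LowerSemicontinuous g) (hfin : ∀ ψ, conj g ψ ≠ ⊤) :
    Continuous (starFn g) := by
  have := (starFn_convexOn hbot hne hlsc hfin).continuousOn isOpen_univ
  exact continuousOn_univ.mp this

set_option maxHeartbeats 2000000 in
lemma P_continuous (hbot : ∀ p, g p ≠ ⊥) (hne : ∃ p, g p ≠ ⊤)
    (hlsc : LowerSemicontinuous g)
    (hstrict : StrictConvexOn ℝ {p : E ϱ | g p ≠ ⊤} (fun p => (g p).toReal))
    (hfin : ∀ ψ, conj g ψ ≠ ⊤) {P : E ϱ → E ϱ}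
    (hPdom : ∀ ψ, g (P ψ) ≠ ⊤)
    (hPval : ∀ ψ, dot ψ (P ψ) - (g (P ψ)).toReal = starFn g ψ) :
    Continuous P := by
  rw [continuous_iff_continuousAt]
  intro θ
  -- a uniform bound for P on the closed unit ball around θ
  obtain ⟨M, hM⟩ := (isCompact_closedBall θ 2).exists_bound_of_continuousOn
    (starFn_continuous hbot hne hlsc hfin).continuousOn
  set R : ℝ := Real.sqrt ϱ * max 0 (2 * M) with hR
  have hPbound : ∀ ψ ∈ Metric.closedBall θ 1, ‖P ψ‖ ≤ R := by
    intro ψ hψ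
    apply norm_le_of_coord (le_max_left _ _)
    intro i
    have hball : ∀ s : ℝ, |s| ≤ 1 →
        ψ + s • EuclideanSpace.single i (1:ℝ) ∈ Metric.closedBall θ 2 := by
      intro s hs
      rw [Metric.mem_closedBall]
      calc dist (ψ + s • EuclideanSpace.single i (1:ℝ)) θ
          ≤ dist (ψ + s • EuclideanSpace.single i (1:ℝ)) ψ + dist ψ θ := dist_triangle _ _ _
        _ ≤ 1 + 1 := by
            apply add_le_add _ (Metric.mem_closedBall.mp hψ)
            rw [dist_self_add_left, norm_smul, EuclideanSpace.norm_single]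
            simpa using hs
        _ = 2 := by norm_num
    have h1 : ψ + EuclideanSpace.single i (1:ℝ) ∈ Metric.closedBall θ 2 := by
      simpa using hball 1 (by norm_num)
    have h2 : ψ - EuclideanSpace.single i (1:ℝ) ∈ Metric.closedBall θ 2 := by
      have := hball (-1) (by norm_num)
      simpa [sub_eq_add_neg] using this
    have hψmem : ψ ∈ Metric.closedBall θ 2 :=
      Metric.closedBall_subset_closedBall (by norm_num) hψ
    have hc : starFn g ψ ≤ dot ψ (P ψ) - (g (P ψ)).toReal := (hPval ψ).ge
    have := coord_bound hbot hne hfin (hPdom ψ) hc i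
    refine le_trans this (le_trans ?_ (le_max_right 0 (2*M)))
    have b1 := hM _ h1
    have b2 := hM _ h2
    have b3 := hM _ hψmem
    rw [Real.norm_eq_abs] at b1 b2 b3
    rw [max_le_iff]
    constructor
    · have hb1 := abs_le.mp b1
      have hb3 := abs_le.mp b3
      linarith
    · have hb2 := abs_le.mp b2
      have hb3 := abs_le.mp b3
      linarith
  -- sequential criterion
  apply tendsto_of_subseq_tendsto
  intro ns hns
  have hev : ∀ᶠ n in atTop, ns n ∈ Metric.closedBall θ 1 :=
    hns (Metric.closedBall_mem_nhds θ one_pos)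
  obtain ⟨n0, hn0⟩ := eventually_atTop.mp hev
  have hmem : ∀ k : ℕ, P (ns (k + n0)) ∈ Metric.closedBall (0 : E ϱ) R := by
    intro k
    rw [Metric.mem_closedBall, dist_zero_right]
    exact hPbound _ (hn0 _ (Nat.le_add_left n0 k))
  obtain ⟨pbar, _, φ, hφ, hconv⟩ :=
    tendsto_subseq_of_bounded (Metric.isBounded_closedBall) hmem
  have htail : Tendsto (fun k => ns (φ k + n0)) atTop (𝓝 θ) := by
    apply hns.comp
    exact tendsto_atTop_mono (fun k => Nat.le_add_right (φ k) n0) hφ.tendsto_atTop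
  have hvals : Tendsto
      (fun k => dot (ns (φ k + n0)) (P (ns (φ k + n0)))
        - (g (P (ns (φ k + n0)))).toReal) atTop (𝓝 (starFn g θ)) := by
    have : Tendsto (fun k => starFn g (ns (φ k + n0))) atTop (𝓝 (starFn g θ)) :=
      ((starFn_continuous hbot hne hlsc hfin).tendsto θ).comp htail
    simpa only [hPval] using this
  obtain ⟨hdomb, hleb⟩ := limit_max hbot hlsc htail
    (fun k => hPdom (ns (φ k + n0))) hconv hvals
  have heq : dot θ pbar - (g pbar).toReal = starFn g θ :=
    le_antisymm (le_starFn hbot hne θ (hfin θ) hdomb) hleb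
  have hpbar : pbar = P θ :=
    max_unique hbot hne hstrict hfin θ hdomb (hPdom θ) heq (hPval θ)
  exact ⟨fun k => φ k + n0, hpbar ▸ hconv⟩

lemma dot_sub_right (θ p q : E ϱ) : dot θ (p - q) = dot θ p - dot θ q := by
  rw [dot_comm, dot_sub_left, dot_comm p θ, dot_comm q θ]

lemma P_hasGradientAt (hbot : ∀ p, g p ≠ ⊥) (hne : ∃ p, g p ≠ ⊤)
    (hlsc : LowerSemicontinuous g)
    (hstrict : StrictConvexOn ℝ {p : E ϱ | g p ≠ ⊤} (fun p => (g p).toReal))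
    (hfin : ∀ ψ, conj g ψ ≠ ⊤) {P : E ϱ → E ϱ}
    (hPdom : ∀ ψ, g (P ψ) ≠ ⊤)
    (hPval : ∀ ψ, dot ψ (P ψ) - (g (P ψ)).toReal = starFn g ψ) (θ : E ϱ) :
    HasGradientAt (starFn g) (P θ) θ := by
  rw [hasGradientAt_iff_hasFDerivAt, hasFDerivAt_iff_isLittleO, Asymptotics.isLittleO_iff]
  intro c hc
  have hcont := P_continuous hbot hne hlsc hstrict hfin hPdom hPval
  have hev : ∀ᶠ x' in 𝓝 θ, dist (P x') (P θ) < c :=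
    Metric.tendsto_nhds.mp (hcont.tendsto θ) c hc
  filter_upwards [hev] with x' hx'
  have htd : (InnerProductSpace.toDual ℝ (E ϱ) (P θ)) (x' - θ) = dot (x' - θ) (P θ) := by
    rw [InnerProductSpace.toDual_apply_apply, ← dot_eq_inner, dot_comm]
  rw [htd]
  have hlow : 0 ≤ starFn g x' - starFn g θ - dot (x' - θ) (P θ) := by
    have h1 : dot x' (P θ) - (g (P θ)).toReal ≤ starFn g x' :=
      le_starFn hbot hne x' (hfin x') (hPdom θ)
    have h2 := hPval θ
    have h3 : dot (x' - θ) (P θ) = dot x' (P θ) - dot θ (P θ) := dot_sub_left _ _ _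
    linarith
  have hup : starFn g x' - starFn g θ - dot (x' - θ) (P θ)
      ≤ dot (x' - θ) (P x' - P θ) := by
    have h1 : dot θ (P x') - (g (P x')).toReal ≤ starFn g θ :=
      le_starFn hbot hne θ (hfin θ) (hPdom x')
    have h2 := hPval x'
    have h3 : dot (x' - θ) (P x') = dot x' (P x') - dot θ (P x') := dot_sub_left _ _ _
    have h4 : dot (x' - θ) (P x' - P θ) = dot (x' - θ) (P x') - dot (x' - θ) (P θ) :=
      dot_sub_right _ _ _
    linarith
  have hcs : |dot (x' - θ) (P x' - P θ)| ≤ ‖x' - θ‖ * ‖P x' - P θ‖ := by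
    rw [dot_eq_inner]
    exact abs_real_inner_le_norm _ _
  have hnorm : ‖P x' - P θ‖ ≤ c := by
    rw [← dist_eq_norm]
    exact hx'.le
  rw [Real.norm_eq_abs, abs_of_nonneg hlow]
  calc starFn g x' - starFn g θ - dot (x' - θ) (P θ)
      ≤ dot (x' - θ) (P x' - P θ) := hup
    _ ≤ |dot (x' - θ) (P x' - P θ)| := le_abs_self _
    _ ≤ ‖x' - θ‖ * ‖P x' - P θ‖ := hcs
    _ ≤ ‖x' - θ‖ * c := by
        apply mul_le_mul_of_nonneg_left hnorm (norm_nonneg _)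
    _ = c * ‖x' - θ‖ := mul_comm _ _

end basic


section part2
open Filter Topology
variable {ϱ N : ℕ} {ℓρ : Fin N → E ϱ}

lemma iInf_dot_le [Nonempty (Fin N)] (p : E ϱ) (t : Fin N) :
    (⨅ s, dot p (ℓρ s)) ≤ dot p (ℓρ t) :=
  ciInf_le (Finite.bddBelow_range _) t

lemma le_iInf_dot [Nonempty (Fin N)] {p : E ϱ} {c : ℝ} (h : ∀ t, c ≤ dot p (ℓρ t)) :
    c ≤ ⨅ s, dot p (ℓρ s) := le_ciInf h

lemma Tfun_continuous (hN : 0 < N) : Continuous (Tfun ℓρ) := by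
  have : Nonempty (Fin N) := ⟨⟨0, hN⟩⟩
  have h1 : Continuous (fun p : E ϱ => ⨅ t, dot p (ℓρ t)) := by
    have h2 : (fun p : E ϱ => ⨅ t, dot p (ℓρ t))
        = fun p : E ϱ => Finset.univ.inf' Finset.univ_nonempty (fun t => dot p (ℓρ t)) := by
      funext p
      rw [Finset.inf'_univ_eq_ciInf]
    rw [h2]
    apply Continuous.finset_inf'_apply
    intro t _
    simp only [dot_eq_inner]
    exact continuous_id.inner continuous_const
  exact h1.neg

lemma Tfun_convex [Nonempty (Fin N)] {p q : E ϱ} {a b : ℝ} (ha : 0 ≤ a) (hb : 0 ≤ b)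
    (hab : a + b = 1) : Tfun ℓρ (a • p + b • q) ≤ a * Tfun ℓρ p + b * Tfun ℓρ q := by
  unfold Tfun
  have h : a * (⨅ t, dot p (ℓρ t)) + b * (⨅ t, dot q (ℓρ t)) ≤ ⨅ t, dot (a • p + b • q) (ℓρ t) := by
    apply le_iInf_dot
    intro t
    rw [dot_add_left, dot_smul_left, dot_smul_left]
    have h1 := mul_le_mul_of_nonneg_left (iInf_dot_le (ℓρ := ℓρ) p t) ha
    have h2 := mul_le_mul_of_nonneg_left (iInf_dot_le (ℓρ := ℓρ) q t) hb
    linarith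
  linarith

variable {Ω : E ϱ → EReal}

lemma OmegaT_ne_bot (hbot : ∀ p, Ω p ≠ ⊥) (p : E ϱ) : OmegaT Ω ℓρ p ≠ ⊥ := by
  rw [OmegaT, Ne, EReal.add_eq_bot_iff]
  push_neg
  exact ⟨hbot p, EReal.coe_ne_bot _⟩

lemma OmegaT_top_iff (p : E ϱ) : OmegaT Ω ℓρ p = ⊤ ↔ Ω p = ⊤ := by
  constructor
  · intro h
    by_contra hne
    have := EReal.coe_toReal hne (by
      intro hb
      rw [OmegaT, hb, EReal.bot_add] at h
      exact absurd h (by simp) : Ω p ≠ ⊥)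
    rw [OmegaT, ← this, ← EReal.coe_add] at h
    exact EReal.coe_ne_top _ h
  · intro h
    rw [OmegaT, h, EReal.top_add_coe]

lemma OmegaT_dom : {p : E ϱ | OmegaT Ω ℓρ p ≠ ⊤} = {p : E ϱ | Ω p ≠ ⊤} := by
  ext p
  simp [OmegaT_top_iff]

lemma OmegaT_toReal (hbot : ∀ p, Ω p ≠ ⊥) {p : E ϱ} (hp : Ω p ≠ ⊤) :
    (OmegaT Ω ℓρ p).toReal = (Ω p).toReal + Tfun ℓρ p := by
  rw [OmegaT, EReal.toReal_add hp (hbot p) (EReal.coe_ne_top _) (EReal.coe_ne_bot _),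
    EReal.toReal_coe]

lemma OmegaT_lsc (hbot : ∀ p, Ω p ≠ ⊥) (hlsc : LowerSemicontinuous Ω) (hN : 0 < N) :
    LowerSemicontinuous (OmegaT Ω ℓρ) := by
  have : Nonempty (Fin N) := ⟨⟨0, hN⟩⟩
  intro p y hy
  rcases eq_or_ne (Ω p) ⊤ with hp | hp
  · -- OmegaT p = ⊤
    have htop : OmegaT Ω ℓρ p = ⊤ := (OmegaT_top_iff p).mpr hp
    rw [htop] at hy
    obtain ⟨z, hz1, hz2⟩ := EReal.exists_between_coe_real hy
    have hT : ∀ᶠ q in 𝓝 p, Tfun ℓρ p - 1 < Tfun ℓρ q :=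
      ((Tfun_continuous hN).tendsto p).eventually_const_lt (by linarith)
    have hΩ : ∀ᶠ q in 𝓝 p, ((z - (Tfun ℓρ p - 1) : ℝ) : EReal) < Ω q := by
      apply hlsc p
      rw [hp]
      exact EReal.coe_lt_top _
    filter_upwards [hT, hΩ] with q hq1 hq2
    calc y < ((z : ℝ) : EReal) := hz1
      _ = ((z - (Tfun ℓρ p - 1) : ℝ) : EReal) + ((Tfun ℓρ p - 1 : ℝ) : EReal) := by
          rw [← EReal.coe_add]; norm_num
      _ < Ω q + ((Tfun ℓρ q : ℝ) : EReal) :=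
          EReal.add_lt_add hq2 (EReal.coe_lt_coe_iff.mpr hq1)
      _ = OmegaT Ω ℓρ q := rfl
  · obtain ⟨r, hr⟩ : ∃ r : ℝ, Ω p = ((r : ℝ) : EReal) :=
      ⟨(Ω p).toReal, (EReal.coe_toReal hp (hbot p)).symm⟩
    have hreal : OmegaT Ω ℓρ p = ((r + Tfun ℓρ p : ℝ) : EReal) := by
      rw [OmegaT, hr, ← EReal.coe_add]
    rw [hreal] at hy
    obtain ⟨z, hz1, hz2⟩ := EReal.exists_between_coe_real hy
    rw [EReal.coe_lt_coe_iff] at hz2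
    set ε := (r + Tfun ℓρ p - z) / 2 with hε
    have hεpos : 0 < ε := by rw [hε]; linarith
    have hT : ∀ᶠ q in 𝓝 p, Tfun ℓρ p - ε < Tfun ℓρ q :=
      ((Tfun_continuous hN).tendsto p).eventually_const_lt (by linarith)
    have hΩ : ∀ᶠ q in 𝓝 p, ((r - ε : ℝ) : EReal) < Ω q := by
      apply hlsc p
      rw [hr, gt_iff_lt, EReal.coe_lt_coe_iff]
      linarith
    filter_upwards [hT, hΩ] with q hq1 hq2
    calc y < ((z : ℝ) : EReal) := hz1
      _ ≤ ((r - ε + (Tfun ℓρ p - ε) : ℝ) : EReal) := by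
          rw [EReal.coe_le_coe_iff, hε]; linarith
      _ = ((r - ε : ℝ) : EReal) + ((Tfun ℓρ p - ε : ℝ) : EReal) := by
          rw [← EReal.coe_add]
      _ < Ω q + ((Tfun ℓρ q : ℝ) : EReal) :=
          EReal.add_lt_add hq2 (EReal.coe_lt_coe_iff.mpr hq1)
      _ = OmegaT Ω ℓρ q := rfl

lemma OmegaT_strict (hbot : ∀ p, Ω p ≠ ⊥)
    (hstrict : StrictConvexOn ℝ {p : E ϱ | Ω p ≠ ⊤} (fun p => (Ω p).toReal)) (hN : 0 < N) :
    StrictConvexOn ℝ {p : E ϱ | OmegaT Ω ℓρ p ≠ ⊤}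
      (fun p => (OmegaT Ω ℓρ p).toReal) := by
  have : Nonempty (Fin N) := ⟨⟨0, hN⟩⟩
  rw [OmegaT_dom]
  constructor
  · exact hstrict.1
  · intro x hx y hy hxy a b ha hb hab
    have hmem : a • x + b • y ∈ {p : E ϱ | Ω p ≠ ⊤} :=
      hstrict.1 hx hy ha.le hb.le hab
    simp only
    rw [OmegaT_toReal hbot hmem, OmegaT_toReal hbot hx, OmegaT_toReal hbot hy]
    have h1 := hstrict.2 hx hy hxy ha hb hab
    have h2 := Tfun_convex (ℓρ := ℓρ) (p := x) (q := y) ha.le hb.le hab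
    simp only [smul_eq_mul] at h1 ⊢
    have e1 : a * ((Ω x).toReal + Tfun ℓρ x) = a * (Ω x).toReal + a * Tfun ℓρ x := by ring
    have e2 : b * ((Ω y).toReal + Tfun ℓρ y) = b * (Ω y).toReal + b * Tfun ℓρ y := by ring
    linarith

lemma conj_OmegaT_le (hbot : ∀ p, Ω p ≠ ⊥) (hN : 0 < N) (θ : E ϱ) (t0 : Fin N) :
    conj (OmegaT Ω ℓρ) θ ≤ conj Ω (θ + ℓρ t0) := by
  have : Nonempty (Fin N) := ⟨⟨0, hN⟩⟩
  refine iSup₂_le fun p hp => ?_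
  have hpΩ : Ω p ≠ ⊤ := (OmegaT_top_iff p).not.mp hp
  rw [term_eq_coe (OmegaT_ne_bot hbot) hp θ]
  refine le_trans ?_ (coe_le_conj hbot hpΩ (θ + ℓρ t0))
  rw [EReal.coe_le_coe_iff, OmegaT_toReal hbot hpΩ, dot_add_left]
  have hT : -(dot p (ℓρ t0)) ≤ Tfun ℓρ p := by
    rw [Tfun, neg_le_neg_iff]
    exact iInf_dot_le p t0
  rw [dot_comm (ℓρ t0) p]
  linarith

lemma conj_OmegaT_ne_top (hbot : ∀ p, Ω p ≠ ⊥) (hΩfin : ∀ ψ, conj Ω ψ ≠ ⊤) (hN : 0 < N)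
    (θ : E ϱ) : conj (OmegaT Ω ℓρ) θ ≠ ⊤ := by
  have t0 : Fin N := ⟨0, hN⟩
  intro h
  exact hΩfin (θ + ℓρ t0) (top_le_iff.mp (h ▸ conj_OmegaT_le hbot hN θ t0))

lemma dot_Lrho (π : Fin N → ℝ) (p : E ϱ) :
    dot (Lrho ℓρ π) p = ∑ t, π t * dot (ℓρ t) p := by
  simp only [dot, Lrho, PiLp.toLp_apply, Finset.sum_mul, Finset.mul_sum, mul_assoc]
  rw [Finset.sum_comm]

lemma inf_le_dot_Lrho (hN : 0 < N) {π : Fin N → ℝ} (hπ : π ∈ stdSimplex ℝ (Fin N)) (p : E ϱ) :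
    (⨅ t, dot p (ℓρ t)) ≤ dot (Lrho ℓρ π) p := by
  have : Nonempty (Fin N) := ⟨⟨0, hN⟩⟩
  rw [dot_Lrho]
  calc (⨅ t, dot p (ℓρ t)) = ∑ t, π t * (⨅ s, dot p (ℓρ s)) := by
        rw [← Finset.sum_mul, hπ.2, one_mul]
    _ ≤ ∑ t, π t * dot (ℓρ t) p := by
        apply Finset.sum_le_sum
        intro t _
        rw [dot_comm (ℓρ t) p]
        exact mul_le_mul_of_nonneg_left (iInf_dot_le p t) (hπ.1 t)

lemma starFn_OmegaT_le (hbot : ∀ p, Ω p ≠ ⊥) (hne : ∃ p, Ω p ≠ ⊤)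
    (hΩfin : ∀ ψ, conj Ω ψ ≠ ⊤) (hN : 0 < N) (θ : E ϱ) {π : Fin N → ℝ}
    (hπ : π ∈ stdSimplex ℝ (Fin N)) :
    starFn (OmegaT Ω ℓρ) θ ≤ starFn Ω (θ + Lrho ℓρ π) := by
  have : Nonempty (Fin N) := ⟨⟨0, hN⟩⟩
  have hneT : ∃ p, OmegaT Ω ℓρ p ≠ ⊤ := by
    obtain ⟨p, hp⟩ := hne
    exact ⟨p, (OmegaT_top_iff p).not.mpr hp⟩
  apply starFn_le (OmegaT_ne_bot hbot) hneT θ (conj_OmegaT_ne_top hbot hΩfin hN θ)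
  intro p hp
  have hpΩ : Ω p ≠ ⊤ := (OmegaT_top_iff p).not.mp hp
  have h1 : dot (θ + Lrho ℓρ π) p - (Ω p).toReal ≤ starFn Ω (θ + Lrho ℓρ π) :=
    le_starFn hbot hne _ (hΩfin _) hpΩ
  rw [dot_add_left] at h1
  rw [OmegaT_toReal hbot hpΩ]
  have h2 : -(dot (Lrho ℓρ π) p) ≤ Tfun ℓρ p := by
    rw [Tfun, neg_le_neg_iff]
    exact inf_le_dot_Lrho hN hπ p
  linarith

lemma Lrho_combo (a b : ℝ) (π π' : Fin N → ℝ) :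
    Lrho ℓρ (a • π + b • π') = a • Lrho ℓρ π + b • Lrho ℓρ π' := by
  ext i
  have : (a • Lrho ℓρ π + b • Lrho ℓρ π') i = a * Lrho ℓρ π i + b * Lrho ℓρ π' i := rfl
  rw [this]
  simp only [Lrho, PiLp.toLp_apply, Pi.add_apply, Pi.smul_apply, smul_eq_mul, add_mul,
    Finset.sum_add_distrib, Finset.mul_sum, mul_assoc]

lemma Lrho_vertex (t : Fin N) :
    Lrho ℓρ (fun j => if j = t then (1:ℝ) else 0) = ℓρ t := by
  ext i
  simp [Lrho, ite_mul, Finset.sum_ite_eq']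

lemma vertex_mem_simplex (t : Fin N) :
    (fun j => if j = t then (1:ℝ) else 0) ∈ stdSimplex ℝ (Fin N) := by
  constructor
  · intro j
    by_cases h : j = t <;> simp [h]
  · simp [Finset.sum_ite_eq']

lemma Lrho_line (π : Fin N → ℝ) (t : Fin N) (s : ℝ) :
    Lrho ℓρ ((1 - s) • π + s • (fun j => if j = t then (1:ℝ) else 0))
      = Lrho ℓρ π + s • (ℓρ t - Lrho ℓρ π) := by
  rw [Lrho_combo, Lrho_vertex]
  module

lemma Lrho_continuous : Continuous (Lrho ℓρ) := by
  have h : Continuous (fun π : Fin N → ℝ => ∑ t, π t • ℓρ t) := by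
    apply continuous_finset_sum
    intro t _
    exact (continuous_apply t).smul continuous_const
  have he : Lrho ℓρ = fun π : Fin N → ℝ => ∑ t, π t • ℓρ t := by
    funext π
    ext i
    rw [Lrho, PiLp.toLp_apply]
    induction (Finset.univ : Finset (Fin N)) using Finset.induction with
    | empty =>
        rw [Finset.sum_empty]
        rfl
    | insert a s hnotmem ih =>
        rw [Finset.sum_insert hnotmem, Finset.sum_insert hnotmem, PiLp.add_apply,
          PiLp.smul_apply, smul_eq_mul, ih]
  rw [he]
  exact h

lemma deriv_nonneg_of_min {φ : ℝ → ℝ} {d : ℝ} (hd : HasDerivAt φ d 0)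
    (hmin : ∀ s ∈ Set.Ioc (0:ℝ) 1, φ 0 ≤ φ s) : 0 ≤ d := by
  have hd' := (hd.hasDerivWithinAt (s := Set.Ioi 0))
  rw [hasDerivWithinAt_iff_tendsto_slope] at hd'
  have hset : Set.Ioi (0:ℝ) \ {0} = Set.Ioi 0 :=
    Set.diff_singleton_eq_self (by simp)
  rw [hset] at hd'
  refine ge_of_tendsto hd' ?_
  filter_upwards [Ioc_mem_nhdsGT_of_mem (Set.mem_Ico.mpr ⟨le_refl 0, one_pos⟩)] with s hs
  rw [slope_def_field]
  have h1 := hmin s hs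
  have h2 : 0 < s := hs.1
  rw [div_nonneg_iff]
  left
  constructor
  · linarith
  · simpa using h2.le

lemma envelope_key (hbot : ∀ p, Ω p ≠ ⊥) (hne : ∃ p, Ω p ≠ ⊤)
    (hlsc : LowerSemicontinuous Ω)
    (hstrict : StrictConvexOn ℝ {p : E ϱ | Ω p ≠ ⊤} (fun p => (Ω p).toReal))
    (hΩfin : ∀ ψ, conj Ω ψ ≠ ⊤) (hN : 0 < N)
    {P : E ϱ → E ϱ} (hPdom : ∀ ψ, Ω (P ψ) ≠ ⊤)
    (hPval : ∀ ψ, dot ψ (P ψ) - (Ω (P ψ)).toReal = starFn Ω ψ)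
    (θ : E ϱ) {π : Fin N → ℝ} (hπ : π ∈ stdSimplex ℝ (Fin N))
    (hmin : ∀ π' ∈ stdSimplex ℝ (Fin N),
      starFn Ω (θ + Lrho ℓρ π) ≤ starFn Ω (θ + Lrho ℓρ π')) :
    (OmegaT Ω ℓρ (P (θ + Lrho ℓρ π)) ≠ ⊤ ∧
      dot θ (P (θ + Lrho ℓρ π)) - (OmegaT Ω ℓρ (P (θ + Lrho ℓρ π))).toReal
        = starFn (OmegaT Ω ℓρ) θ) ∧
    starFn Ω (θ + Lrho ℓρ π) = starFn (OmegaT Ω ℓρ) θ := by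
  have : Nonempty (Fin N) := ⟨⟨0, hN⟩⟩
  set c := θ + Lrho ℓρ π with hc
  set q := P c with hq
  -- first-order conditions
  have hfo : ∀ t : Fin N, dot q (Lrho ℓρ π) ≤ dot q (ℓρ t) := by
    intro t
    set v := ℓρ t - Lrho ℓρ π with hv
    have hγ : HasDerivAt (fun s : ℝ => c + s • v) v 0 := by
      have := ((hasDerivAt_id (0:ℝ)).smul_const v).const_add c
      simpa using this
    have hgrad : HasGradientAt (starFn Ω) q c :=
      P_hasGradientAt hbot hne hlsc hstrict hΩfin hPdom hPval c
    have hφ : HasDerivAt (fun s : ℝ => starFn Ω (c + s • v))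
        ((InnerProductSpace.toDual ℝ (E ϱ) q) v) 0 := by
      have h0 : HasFDerivAt (starFn Ω) ((InnerProductSpace.toDual ℝ (E ϱ)) q)
          ((fun s : ℝ => c + s • v) 0) := by
        simpa using hgrad.hasFDerivAt
      have := h0.comp_hasDerivAt 0 hγ
      simpa [Function.comp_def] using this
    have hmin' : ∀ s ∈ Set.Ioc (0:ℝ) 1,
        (fun s : ℝ => starFn Ω (c + s • v)) 0 ≤ (fun s : ℝ => starFn Ω (c + s • v)) s := by
      intro s hs
      simp only [zero_smul, add_zero]
      have hmem : (1 - s) • π + s • (fun j => if j = t then (1:ℝ) else 0)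
          ∈ stdSimplex ℝ (Fin N) :=
        (convex_stdSimplex ℝ (Fin N)) hπ (vertex_mem_simplex t)
          (by linarith [hs.2]) (le_of_lt hs.1) (by ring)
      have := hmin _ hmem
      rw [Lrho_line] at this
      rw [hc]
      calc starFn Ω (θ + Lrho ℓρ π) ≤ starFn Ω (θ + (Lrho ℓρ π + s • v)) := by
            rw [hv]; exact this
        _ = starFn Ω (θ + Lrho ℓρ π + s • v) := by rw [add_assoc]
    have hder : 0 ≤ (InnerProductSpace.toDual ℝ (E ϱ) q) v := deriv_nonneg_of_min hφ hmin'
    rw [InnerProductSpace.toDual_apply_apply, ← dot_eq_inner, hv, dot_sub_right] at hder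
    linarith
  have hinf : dot q (Lrho ℓρ π) = ⨅ t, dot q (ℓρ t) := by
    apply le_antisymm
    · exact le_iInf_dot hfo
    · rw [dot_comm]
      exact inf_le_dot_Lrho hN hπ q
  have hqdom : Ω q ≠ ⊤ := hPdom c
  have hqdomT : OmegaT Ω ℓρ q ≠ ⊤ := (OmegaT_top_iff q).not.mpr hqdom
  have hval : dot θ q - (OmegaT Ω ℓρ q).toReal = starFn Ω c := by
    rw [OmegaT_toReal hbot hqdom, Tfun, ← hinf, ← hPval c, hc, dot_add_left, dot_comm q]
    ring
  have hle1 : starFn Ω c ≤ starFn (OmegaT Ω ℓρ) θ := by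
    rw [← hval]
    have hneT : ∃ p, OmegaT Ω ℓρ p ≠ ⊤ := ⟨q, hqdomT⟩
    exact le_starFn (OmegaT_ne_bot hbot) hneT θ (conj_OmegaT_ne_top hbot hΩfin hN θ) hqdomT
  have hle2 : starFn (OmegaT Ω ℓρ) θ ≤ starFn Ω c :=
    starFn_OmegaT_le hbot hne hΩfin hN θ hπ
  have heq : starFn Ω c = starFn (OmegaT Ω ℓρ) θ := le_antisymm hle1 hle2
  exact ⟨⟨hqdomT, by rw [hval, heq]⟩, heq⟩

end part2


/-- Envelope theorem: under Condition 1 and strict convexity of Ω on its domain, `Ω_T^*` is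
differentiable on `ℝ^ϱ` and, for every `θ` and every `π ∈ Π(θ)`, the gradient of the value
function `θ ↦ min_{π' ∈ Δ^N} Ω^*(θ + L^ρ π')` at `θ` equals `∇Ω^*(θ + L^ρ π)`; in particular
`∇Ω_T^*(θ) = ∇Ω^*(θ + L^ρ π)`. -/
theorem envelope_theorem_for_convolutional_FY
    {K N ϱ : ℕ} (hK : 0 < K) (hN : 0 < N) (hϱ : 0 < ϱ)
    (Ω : E ϱ → EReal) (ρ : Fin K → E ϱ) (ℓρ : Fin N → E ϱ)
    (hcond : Condition1 Ω ρ)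
    (hstrict : StrictConvexOn ℝ {p : E ϱ | Ω p ≠ ⊤} (fun p => (Ω p).toReal)) :
    Differentiable ℝ (starFn (OmegaT Ω ℓρ)) ∧
    ∀ θ : E ϱ, ∀ π ∈ Pii Ω ℓρ θ,
      gradient
          (fun θ' => (⨅ π' ∈ stdSimplex ℝ (Fin N), conj Ω (θ' + Lrho ℓρ π')).toReal) θ
        = gradient (starFn Ω) (θ + Lrho ℓρ π) ∧
      gradient (starFn (OmegaT Ω ℓρ)) θ = gradient (starFn Ω) (θ + Lrho ℓρ π) := by
  obtain ⟨hbot, hne, hconv, hlsc, hdom, hfin⟩ := hcond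
  have instN : Nonempty (Fin N) := ⟨⟨0, hN⟩⟩
  -- maximizer selections for Ω and Ω_T
  choose P hPdom hPval using fun ψ => exists_max hbot hne hlsc hfin ψ
  -- properties of Ω_T
  have hbotT : ∀ p, OmegaT Ω ℓρ p ≠ ⊥ := OmegaT_ne_bot hbot
  have hneT : ∃ p, OmegaT Ω ℓρ p ≠ ⊤ := by
    obtain ⟨p, hp⟩ := hne
    exact ⟨p, (OmegaT_top_iff p).not.mpr hp⟩
  have hlscT : LowerSemicontinuous (OmegaT Ω ℓρ) := OmegaT_lsc hbot hlsc hN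
  have hstrictT := OmegaT_strict (ℓρ := ℓρ) hbot hstrict hN
  have hfinT : ∀ ψ, conj (OmegaT Ω ℓρ) ψ ≠ ⊤ := conj_OmegaT_ne_top hbot hfin hN
  choose PT hPTdom hPTval using fun ψ => exists_max hbotT hneT hlscT hfinT ψ
  have hgradT : ∀ θ, HasGradientAt (starFn (OmegaT Ω ℓρ)) (PT θ) θ :=
    P_hasGradientAt hbotT hneT hlscT hstrictT hfinT hPTdom hPTval
  have hdiff : Differentiable ℝ (starFn (OmegaT Ω ℓρ)) :=
    fun θ => (hgradT θ).hasFDerivAt.differentiableAt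
  refine ⟨hdiff, ?_⟩
  intro θ π hπ
  obtain ⟨hπΔ, hπmin⟩ := hπ
  -- convert minimality to real form
  have hπmin' : ∀ π' ∈ stdSimplex ℝ (Fin N),
      starFn Ω (θ + Lrho ℓρ π) ≤ starFn Ω (θ + Lrho ℓρ π') := by
    intro π' hπ'
    have := hπmin π' hπ'
    rw [conj_eq_coe hbot hne _ (hfin _), conj_eq_coe hbot hne _ (hfin _),
      EReal.coe_le_coe_iff] at this
    exact this
  obtain ⟨⟨hqdomT, hqval⟩, hentry⟩ :=
    envelope_key hbot hne hlsc hstrict hfin hN hPdom hPval θ hπΔ hπmin'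
  -- q = PT θ
  have hqPT : P (θ + Lrho ℓρ π) = PT θ :=
    max_unique hbotT hneT hstrictT hfinT θ hqdomT (hPTdom θ) hqval (hPTval θ)
  have hgradΩ : HasGradientAt (starFn Ω) (P (θ + Lrho ℓρ π)) (θ + Lrho ℓρ π) :=
    P_hasGradientAt hbot hne hlsc hstrict hfin hPdom hPval (θ + Lrho ℓρ π)
  have hg1 : gradient (starFn Ω) (θ + Lrho ℓρ π) = P (θ + Lrho ℓρ π) :=
    hgradΩ.gradient
  have hg2 : gradient (starFn (OmegaT Ω ℓρ)) θ = PT θ := (hgradT θ).gradient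
  -- the value function is starFn (OmegaT Ω ℓρ)
  have hvfun : (fun θ' => (⨅ π' ∈ stdSimplex ℝ (Fin N), conj Ω (θ' + Lrho ℓρ π')).toReal)
      = starFn (OmegaT Ω ℓρ) := by
    funext θ'
    -- attainment of the min over the simplex
    have hFcont : ContinuousOn (fun π' : Fin N → ℝ => starFn Ω (θ' + Lrho ℓρ π'))
        (stdSimplex ℝ (Fin N)) := by
      apply Continuous.continuousOn
      exact (starFn_continuous hbot hne hlsc hfin).comp
        (continuous_const.add Lrho_continuous)
    obtain ⟨πs, hπsΔ, hπsmin⟩ := (isCompact_stdSimplex ℝ (Fin N)).exists_isMinOn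
      ⟨_, vertex_mem_simplex ⟨0, hN⟩⟩ hFcont
    have hπsmin' : ∀ π' ∈ stdSimplex ℝ (Fin N),
        starFn Ω (θ' + Lrho ℓρ πs) ≤ starFn Ω (θ' + Lrho ℓρ π') :=
      fun π' hπ' => hπsmin hπ'
    have hinf : (⨅ π' ∈ stdSimplex ℝ (Fin N), conj Ω (θ' + Lrho ℓρ π'))
        = conj Ω (θ' + Lrho ℓρ πs) := by
      apply le_antisymm
      · exact iInf₂_le πs hπsΔ
      · refine le_iInf₂ fun π' hπ' => ?_
        rw [conj_eq_coe hbot hne _ (hfin _), conj_eq_coe hbot hne _ (hfin _)]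
        exact EReal.coe_le_coe_iff.mpr (hπsmin' π' hπ')
    rw [hinf]
    have := (envelope_key hbot hne hlsc hstrict hfin hN hPdom hPval θ' hπsΔ hπsmin').2
    rw [conj_eq_coe hbot hne _ (hfin _), EReal.toReal_coe]
    exact this
  constructor
  · rw [hvfun, hg2, hg1, hqPT]
  · rw [hg2, hg1, hqPT]
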